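/- arXiv:1502.01036 — 8 statements merged into one kernel-verified Lean document; each statement's English description precedes it below -/
import Mathlib

section
/- For all real numbers a, b, x, y with 0 < a ≤ 1, 0 < b, 0 ≤ x ≤ a/2 and 0 ≤ y ≤ 1/2, one has d_{D,1}(x,y) ≥ min{ d_{R,0}(x,y), d_{R,1}(x,y), d_{U,1}(x,y) }. -/
noncomputable def dR0 (a b x y : ℝ) : ℝ := 4*y^2 + a^2 + 2*a*b + b^2
noncomputable def dR1 (a b x y : ℝ) : ℝ := 2*x^2 + 4*x*y + 2*y^2 - 2*b*x - 2*b*y + a^2/2 + (b+1)*a + b^2 + b + 1/2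
noncomputable def dU1 (a b x y : ℝ) : ℝ := 2*x^2 - 4*x*y + 2*y^2 + 2*b*x - 2*b*y + a^2/2 + (b+1)*a + b^2 + b + 1/2
noncomputable def dD1 (a b x y : ℝ) : ℝ := 2*x^2 - 4*x*y + 2*y^2 - 2*b*x + 2*b*y + a^2/2 + (b+1)*a + b^2 + b + 1/2
noncomputable def dL1 (a b x y : ℝ) : ℝ := 2*x^2 + 4*x*y + 2*y^2 + 2*b*x + 2*b*y + a^2/2 + (b+1)*a + b^2 + b + 1/2
noncomputable def dR2 (a b x y : ℝ) : ℝ := 4*x^2 - (4*a+4*b)*x + 2*a^2 + (2*b+2)*a + b^2 + 1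
noncomputable def dL2 (a b x y : ℝ) : ℝ := 4*x^2 + (4*a+4*b)*x + 2*a^2 + (2*b+2)*a + b^2 + 1
noncomputable def dU0 (a b x y : ℝ) : ℝ := 4*x^2 + b^2 + 2*b + 1
noncomputable def dU2 (a b x y : ℝ) : ℝ := 4*y^2 - (4*b+4)*y + a^2 + 2*a + b^2 + 2*b + 2
noncomputable def dD2 (a b x y : ℝ) : ℝ := 4*y^2 + (4*b+4)*y + a^2 + 2*a + b^2 + 2*b + 2

theorem stmt0 (a b x y : ℝ) (ha0 : 0 < a) (ha1 : a ≤ 1) (hb : 0 < b)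
    (hx0 : 0 ≤ x) (hx1 : x ≤ a/2) (hy0 : 0 ≤ y) (hy1 : y ≤ 1/2) :
    min (min (dR0 a b x y) (dR1 a b x y)) (dU1 a b x y) ≤ dD1 a b x y := by
  simp only [dR0, dR1, dU1, dD1]
  rcases le_total x y with h | h
  · exact le_trans (min_le_right _ _) (by nlinarith)
  · rcases le_total (2*x) b with h2 | h2
    · exact le_trans (le_trans (min_le_left _ _) (min_le_right _ _)) (by nlinarith)
    · refine le_trans (le_trans (min_le_left _ _) (min_le_left _ _)) ?_
      nlinarith [sq_nonneg (x - y - b/2), sq_nonneg (1 - 2*y), mul_nonneg (sub_nonneg.2 h) hb.le, mul_nonneg (sub_nonneg.2 ha1) (sub_nonneg.2 h2), sq_nonneg (a - 2*x), mul_nonneg hy0 (sub_nonneg.2 hy1)]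
end

section
/- For all real numbers a, b, x, y with 0 < b < a ≤ 1 and 0 ≤ y ≤ x ≤ a/2, one has d_{D,1}(x,y) ≥ d_{R,0}(x,y). -/
theorem stmt1 (a b x y : ℝ) (hb0 : 0 < b) (hba : b < a) (ha1 : a ≤ 1)
    (hy0 : 0 ≤ y) (hyx : y ≤ x) (hx : x ≤ a/2) :
    dR0 a b x y ≤ dD1 a b x y := by
  unfold dR0 dD1
  nlinarith [mul_nonneg (sub_nonneg.2 ha1) hb0.le, mul_nonneg (sub_nonneg.2 ha1) (show (0:ℝ) ≤ a by linarith), mul_nonneg (sub_nonneg.2 ha1) (show (0:ℝ) ≤ 1 + a by linarith), mul_nonneg (sub_nonneg.2 hx) (show (0:ℝ) ≤ a - 2*x + 4*y by linarith), mul_nonneg (sub_nonneg.2 hyx) (show (0:ℝ) ≤ 2*a - x + y - b by linarith)]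
end

section
/- For all real a, b with 0 < a ≤ 1 and 0 < b, one has d_{R,0}(a/2, 1/2) = d_{U,1}(a/2, 1/2). If moreover a + b < 1, then d_{R,0}(x,y) < d_{U,1}(x,y) for every (x,y) with 0 ≤ x ≤ a/2, 0 ≤ y ≤ 1/2 and (x,y) ≠ (a/2, 1/2). -/
theorem stmt8 (a b : ℝ) (ha0 : 0 < a) (ha1 : a ≤ 1) (hb : 0 < b) :
    dR0 a b (a/2) (1/2) = dU1 a b (a/2) (1/2) ∧
    (a + b < 1 → ∀ x y : ℝ, 0 ≤ x → x ≤ a/2 → 0 ≤ y → y ≤ 1/2 →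
      (x, y) ≠ (a/2, 1/2) → dR0 a b x y < dU1 a b x y) := by
  constructor
  · unfold dR0 dU1; ring
  · intro hab x y hx hxa hy hy1 hne
    have hcase : x < a/2 ∨ y < 1/2 := by
      rcases hxa.lt_or_eq with h | h
      · exact Or.inl h
      · rcases hy1.lt_or_eq with h' | h'
        · exact Or.inr h'
        · exact absurd (by rw [h, h']) hne
    unfold dR0 dU1
    rcases hcase with h | h
    · nlinarith [sq_nonneg (x - y), mul_pos hb (sub_pos.mpr h), sq_nonneg (1/2 - y), mul_nonneg hx (sub_nonneg.mpr hy1), mul_nonneg hy (sub_nonneg.mpr hy1)]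
    · nlinarith [sq_nonneg (x - y), mul_pos hb (sub_pos.mpr h), mul_nonneg hx (sub_nonneg.mpr hy1), mul_nonneg hy (sub_nonneg.mpr hy1), sub_nonneg.mpr hxa]
end

section
/- If 0 < a ≤ 1, 1 < b, and 2a − 2b + 1 > 0 (i.e., b < a + 1/2), then d_{R,1}(a/2, 1/2) = d_{R,2}(a/2, 1/2), and d_{R,1}(x,y) < d_{R,2}(x,y) for every (x,y) with 0 ≤ x ≤ a/2, 0 ≤ y ≤ 1/2 and (x,y) ≠ (a/2, 1/2). -/
theorem stmt9 (a b : ℝ) (ha0 : 0 < a) (ha1 : a ≤ 1) (hb : 1 < b)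
    (hab : 2*a - 2*b + 1 > 0) :
    dR1 a b (a/2) (1/2) = dR2 a b (a/2) (1/2) ∧
    (∀ x y : ℝ, 0 ≤ x → x ≤ a/2 → 0 ≤ y → y ≤ 1/2 →
      (x, y) ≠ (a/2, 1/2) → dR1 a b x y < dR2 a b x y) := by
  constructor
  · simp only [dR1, dR2]; ring
  · intro x y hx0 hx hy0 hy hne
    simp only [dR1, dR2]
    rcases eq_or_lt_of_le hx with hxe | hxlt
    · rcases eq_or_lt_of_le hy with hye | hylt
      · exact absurd (Prod.ext hxe hye) hne
      · nlinarith [mul_nonneg hx0 hy0, mul_nonneg hx0 hy0, sq_nonneg (a/2 - x),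
          mul_pos (sub_pos.mpr hylt) (sub_pos.mpr hylt)]
    · nlinarith [mul_nonneg hx0 hy0, sq_nonneg (a/2 - x), sq_nonneg (1/2 - y),
        mul_nonneg (sub_nonneg.mpr hy0) (sub_pos.mpr hxlt).le,
        mul_nonneg (sub_nonneg.mpr hy) (sub_pos.mpr hxlt).le,
        mul_nonneg (sub_nonneg.mpr hy) (sub_nonneg.mpr hy0)]
end

section
/- Let 0 < a ≤ 1 and 1 < b. If there exists a real number y with 0 ≤ y ≤ 1/2 such that d_{R,0}(a/2, y) = d_{R,1}(a/2, y) = d_{R,2}(a/2, y), then 2a² + (−3b + 1)a + 2b² − 2b = 0. -/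
theorem stmt13 (a b : ℝ) (ha0 : 0 < a) (ha1 : a ≤ 1) (hb : 1 < b)
    (h : ∃ y : ℝ, 0 ≤ y ∧ y ≤ 1/2 ∧
      dR0 a b (a/2) y = dR1 a b (a/2) y ∧ dR1 a b (a/2) y = dR2 a b (a/2) y) :
    2*a^2 + (-3*b + 1)*a + 2*b^2 - 2*b = 0 := by
  obtain ⟨y, hy0, hy12, h1, h2⟩ := h
  simp only [dR0, dR1, dR2] at h1 h2
  have hy : 2*y*(b-a) = b - a*b := by linear_combination (h1 - h2)/2
  have hy2 : 4*y^2 = 2*a + 1 - 2*a*b := by linear_combination h1 + h2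
  have key : a*(b-1)*(2*a^2 + (-3*b + 1)*a + 2*b^2 - 2*b) = 0 := by
    linear_combination (b-a)^2 * hy2 - (2*y*(b-a) + (b - a*b)) * hy
  rcases mul_eq_zero.mp key with h0 | h0
  · have : 0 < a*(b-1) := mul_pos ha0 (by linarith)
    linarith
  · exact h0
end

section
/- Let 0 < a ≤ 1 and 1 < b. If there exists a real number x with 0 ≤ x ≤ a/2 such that d_{R,0}(x, 0) = d_{R,1}(x, 0) = d_{R,2}(x, 0), then (2b − 2)a³ + (b² − 1)a² − b² = 0. -/
theorem stmt14 (a b : ℝ) (ha0 : 0 < a) (ha1 : a ≤ 1) (hb : 1 < b)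
    (h : ∃ x : ℝ, 0 ≤ x ∧ x ≤ a/2 ∧
      dR0 a b x 0 = dR1 a b x 0 ∧ dR1 a b x 0 = dR2 a b x 0) :
    (2*b - 2)*a^3 + (b^2 - 1)*a^2 - b^2 = 0 := by
  obtain ⟨x, _, _, h1, h2⟩ := h
  simp only [dR0, dR1, dR2] at h1 h2
  linear_combination (2*a^2 + a*b - (a^2+a*b-b)/2 - a*x) * h1 +
    ((a^2+a*b-b)/2 + a*x - a*b) * h2
end

section
/- Let a > 0 and b > 0 be real numbers. If there exists a real number y such that d_{R,0}(0, y) = d_{R,1}(0, y) = d_{U,0}(0, y), then (b² + 1)a² + 2b³a − 2b³ − b² = 0. -/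
theorem stmt15 (a b : ℝ) (ha : 0 < a) (hb : 0 < b)
    (h : ∃ y : ℝ, dR0 a b 0 y = dR1 a b 0 y ∧ dR1 a b 0 y = dU0 a b 0 y) :
    (b^2 + 1)*a^2 + 2*b^3*a - 2*b^3 - b^2 = 0 := by
  obtain ⟨y, h1, h2⟩ := h
  simp only [dR0, dR1, dU0] at h1 h2
  have hby : 2*b*y = a := by linarith
  linear_combination 2*b^2*h2 + (2*b^2 - a - 2*b*y)*hby
end

section
/- For all real a, b, x, y one has d_{U,2}(x,y) − d_{R,2}(x,y) = 4·(y − x − (1−a)/2)·(y + x − (a + 2b + 1)/2). Consequently, if 0 < a ≤ 1, 0 < b, 0 ≤ x ≤ a/2 and 0 ≤ y ≤ 1/2, then d_{R,2}(x,y) < d_{U,2}(x,y) if and only if y < x + (1−a)/2, and d_{R,2}(x,y) = d_{U,2}(x,y) if and only if y = x + (1−a)/2. -/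
theorem stmt17 :
    (∀ a b x y : ℝ, dU2 a b x y - dR2 a b x y =
      4*(y - x - (1 - a)/2)*(y + x - (a + 2*b + 1)/2)) ∧
    (∀ a b x y : ℝ, 0 < a → a ≤ 1 → 0 < b →
      0 ≤ x → x ≤ a/2 → 0 ≤ y → y ≤ 1/2 →
      ((dR2 a b x y < dU2 a b x y ↔ y < x + (1 - a)/2) ∧
       (dR2 a b x y = dU2 a b x y ↔ y = x + (1 - a)/2))) := by
  have key : ∀ a b x y : ℝ, dU2 a b x y - dR2 a b x y =
      4*(y - x - (1 - a)/2)*(y + x - (a + 2*b + 1)/2) := by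
    intro a b x y; simp only [dU2, dR2]; ring
  refine ⟨key, ?_⟩
  intro a b x y ha ha1 hb hx hxa hy hy1
  have hneg : y + x - (a + 2*b + 1)/2 < 0 := by linarith
  constructor
  · constructor
    · intro h
      have hd : dU2 a b x y - dR2 a b x y > 0 := by linarith
      rw [key a b x y] at hd
      nlinarith
    · intro h
      have : dU2 a b x y - dR2 a b x y > 0 := by
        rw [key a b x y]; nlinarith
      linarith
  · constructor
    · intro h
      have hd : dU2 a b x y - dR2 a b x y = 0 := by linarith
      rw [key a b x y] at hd
      rcases mul_eq_zero.1 hd with h1 | h2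
      · rcases mul_eq_zero.1 h1 with h0 | h1'
        · norm_num at h0
        · linarith
      · linarith
    · intro h
      have : dU2 a b x y - dR2 a b x y = 0 := by
        rw [key a b x y]; nlinarith
      linarith
end
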